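/- arXiv:1805.06331 — 4 statements merged into one kernel-verified Lean document; each statement's English description precedes it below -/
import Mathlib

section
/- Let F be a finite group, N a normal subgroup of F, and P a p-subgroup of F for a prime p. If the order of N is coprime to p, then the normalizer in F/N of the image PN/N of P equals the image of the normalizer of P, i.e. N_{F/N}(PN/N) = (N_F(P)N)/N. -/
/-!
Since `|N|` is prime to `p`, the `p`-group `P` meets `N` trivially and is therefore a Sylow
`p`-subgroup of `PN`. The Frattini argument (any `x ∈ N_F(PN)` moves `P` to a Sylow subgroup
`xPx⁻¹` of `PN`, which some `k ∈ PN` moves back) gives `N_F(PN) = N_F(P) N`, and `N_F(PN)` is the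
preimage of `N_{F/N}(PN/N)`.
-/

open Pointwise

namespace Subgroup

variable {G : Type*} [Group G]

theorem relIndex_sup_eq_card_of_disjoint {H N : Subgroup G} [N.Normal] [Finite H]
    (h : Disjoint N H) : H.relIndex (H ⊔ N) = Nat.card N := by
  have hH : Nat.card H * H.relIndex (H ⊔ N) = Nat.card ↥(H ⊔ N) := by
    simpa only [relIndex_bot_left] using relIndex_mul_relIndex ⊥ H (H ⊔ N) bot_le le_sup_left
  have hN : Nat.card N * N.relIndex (H ⊔ N) = Nat.card ↥(H ⊔ N) := by
    simpa only [relIndex_bot_left] using relIndex_mul_relIndex ⊥ N (H ⊔ N) bot_le le_sup_right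
  have hNH : N.relIndex (H ⊔ N) = Nat.card H := by
    rw [relIndex_sup_right, ← inf_relIndex_right, h.eq_bot, relIndex_bot_left]
  rw [hNH, mul_comm, ← hH] at hN
  exact (Nat.eq_of_mul_eq_mul_left Nat.card_pos hN).symm

variable {p : ℕ} [Fact p.Prime]

theorem exists_mem_conj_smul_eq_of_not_dvd_relIndex {K P Q : Subgroup G} [Finite K]
    (hP : IsPGroup p P) (hQ : IsPGroup p Q) (hPK : P ≤ K) (hQK : Q ≤ K)
    (hPi : ¬ p ∣ P.relIndex K) (hQi : ¬ p ∣ Q.relIndex K) :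
    ∃ k ∈ K, MulAut.conj k • Q = P := by
  let S : Sylow p K := (hP.of_equiv (subgroupOfEquivOfLe hPK).symm).toSylow hPi
  let T : Sylow p K := (hQ.of_equiv (subgroupOfEquivOfLe hQK).symm).toSylow hQi
  obtain ⟨k, hk⟩ := MulAction.exists_smul_eq K T S
  have hk' : (MulAut.conj (k : G) • Q).subgroupOf K = P.subgroupOf K := by
    rw [← conj_smul_subgroupOf hQK]
    exact Sylow.coe_subgroup_smul.symm.trans (congrArg Sylow.toSubgroup hk)
  rw [subgroupOf_inj, inf_of_le_left (conj_smul_le_of_le hQK k), inf_of_le_left hPK] at hk'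
  exact ⟨k, k.2, hk'⟩

theorem normalizer_le_normalizer_sup_of_not_dvd_relIndex {K P : Subgroup G} [Finite K]
    (hP : IsPGroup p P) (hPK : P ≤ K) (hPi : ¬ p ∣ P.relIndex K) :
    normalizer (K : Set G) ≤ normalizer (P : Set G) ⊔ K := by
  intro x hx
  have hxK : MulAut.conj x • K = K := mem_normalizer_iff_map_conj_eq.mp hx
  have hQK : MulAut.conj x • P ≤ K := hxK ▸ pointwise_smul_le_pointwise_smul_iff.mpr hPK
  have hQi : (MulAut.conj x • P).relIndex K = P.relIndex K := by
    rw [← relIndex_pointwise_smul (MulAut.conj x) P K, hxK]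
  obtain ⟨k, hk, hkx⟩ := exists_mem_conj_smul_eq_of_not_dvd_relIndex hP (hP.map _) hPK hQK hPi
    (hQi ▸ hPi)
  have hkx' : k * x ∈ normalizer (P : Set G) := by
    rw [mem_normalizer_iff_map_conj_eq, map_mul]
    exact (mul_smul _ _ P).trans hkx
  rw [sup_comm, ← inv_mul_cancel_left k x]
  exact mul_mem_sup (inv_mem hk) hkx'

theorem _root_.IsPGroup.normalizer_sup_eq_of_coprime [Finite G] {P N : Subgroup G} [N.Normal]
    (hP : IsPGroup p P) (hN : (Nat.card N).Coprime p) :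
    normalizer ((P ⊔ N : Subgroup G) : Set G) = normalizer (P : Set G) ⊔ N := by
  refine le_antisymm ?_ (sup_le normalizer_le_normalizer_sup_normal
    (le_sup_right.trans le_normalizer))
  have hdisj : Disjoint N P := by
    obtain ⟨n, hn⟩ := hP.exists_card_eq
    exact disjoint_of_coprime_natCard (hn ▸ hN.pow_right n)
  have hPi : ¬ p ∣ P.relIndex (P ⊔ N) := by
    rw [relIndex_sup_eq_card_of_disjoint hdisj]
    exact (Nat.Prime.coprime_iff_not_dvd Fact.out).mp hN.symm
  calc normalizer ((P ⊔ N : Subgroup G) : Set G)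
      ≤ normalizer (P : Set G) ⊔ (P ⊔ N) :=
        normalizer_le_normalizer_sup_of_not_dvd_relIndex hP le_sup_left hPi
    _ = normalizer (P : Set G) ⊔ N := by rw [← sup_assoc, sup_of_le_left le_normalizer]

end Subgroup

/-- Let `F` be a finite group, `N ⊴ F`, and `P` a `p`-subgroup of `F`. If `|N|` is coprime
to `p`, then the normalizer in `F⧸N` of the image `PN/N` of `P` is the image of the
normalizer of `P`: `N_{F/N}(PN/N) = (N_F(P)N)/N`. -/
theorem normalizer_map_quotient_of_coprime {F : Type*} [Group F] [Finite F]
    (p : ℕ) [Fact p.Prime] (N : Subgroup F) [N.Normal] (P : Subgroup F)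
    (hP : IsPGroup p P) (hcop : Nat.Coprime (Nat.card N) p) :
    Subgroup.normalizer ((P.map (QuotientGroup.mk' N) : Subgroup (F ⧸ N)) : Set (F ⧸ N))
      = (Subgroup.normalizer (P : Set F)).map (QuotientGroup.mk' N) := by
  have hsurj := QuotientGroup.mk'_surjective N
  rw [← Subgroup.map_comap_eq_self_of_surjective hsurj (Subgroup.normalizer _),
    Subgroup.comap_normalizer_eq_of_surjective _ hsurj, Subgroup.comap_map_eq,
    QuotientGroup.ker_mk', hP.normalizer_sup_eq_of_coprime hcop, Subgroup.map_sup,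
    QuotientGroup.map_mk'_self, sup_bot_eq]
end

section
/- Let F be a finite group, N a normal subgroup of F of order coprime to a prime p, and P a p-subgroup of F. Then the centralizer in F/N of the image PN/N equals the image of the centralizer of P, i.e. C_{F/N}(PN/N) = (C_F(P)N)/N. -/
/-- Let `F` be a finite group, `N ⊴ F` of order coprime to a prime `p`, and `P` a
`p`-subgroup of `F`. Then the centralizer in `F⧸N` of the image `PN/N` is the image of the
centralizer of `P`: `C_{F/N}(PN/N) = (C_F(P)N)/N`. -/
theorem centralizer_map_quotient_of_coprime {F : Type*} [Group F] [Finite F]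
    (p : ℕ) [Fact p.Prime] (N : Subgroup F) [N.Normal] (P : Subgroup F)
    (hP : IsPGroup p P) (hcop : Nat.Coprime (Nat.card N) p) :
    Subgroup.centralizer ((P.map (QuotientGroup.mk' N) : Subgroup (F ⧸ N)) : Set (F ⧸ N))
      = (Subgroup.centralizer (P : Set F)).map (QuotientGroup.mk' N) := by
  apply le_antisymm
  · intro xbar hx
    obtain ⟨x, rfl⟩ := QuotientGroup.mk'_surjective N xbar
    rw [Subgroup.mem_centralizer_iff] at hx
    -- the fiber of the quotient map over `mk x`
    set T := {a : F // QuotientGroup.mk' N a = QuotientGroup.mk' N x} with hT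
    have key : ∀ (g : F), g ∈ P → ∀ a : T, QuotientGroup.mk' N (g * (a : F) * g⁻¹)
        = QuotientGroup.mk' N x := by
      intro g hg a
      have hga : QuotientGroup.mk' N g * QuotientGroup.mk' N x
          = QuotientGroup.mk' N x * QuotientGroup.mk' N g :=
        hx _ ⟨g, hg, rfl⟩
      have := a.2
      simp only [map_mul, map_inv, this]
      rw [hga]
      group
    letI : MulAction ↥P T :=
      { smul := fun g a => ⟨(g : F) * (a : F) * (g : F)⁻¹, key g g.2 a⟩
        one_smul := fun a => by
          apply Subtype.ext
          show ((1 : ↥P) : F) * (a : F) * ((1 : ↥P) : F)⁻¹ = (a : F)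
          simp
        mul_smul := fun g h a => by
          apply Subtype.ext
          show ((g * h : ↥P) : F) * (a : F) * ((g * h : ↥P) : F)⁻¹
            = (g : F) * ((h : F) * (a : F) * (h : F)⁻¹) * (g : F)⁻¹
          push_cast
          group }
    have hcard : Nat.card T = Nat.card N := by
      refine Nat.card_congr ⟨fun a => ⟨x⁻¹ * (a : F), ?_⟩, fun n => ⟨x * (n : F), ?_⟩, ?_, ?_⟩
      · have := a.2
        rw [QuotientGroup.mk'_eq_mk'] at this
        obtain ⟨n, hn, h⟩ := this
        have h1 : (x⁻¹ * (a : F)) * n = 1 := by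
          rw [mul_assoc, h]; group
        rw [eq_inv_of_mul_eq_one_left h1]
        exact N.inv_mem hn
      · rw [QuotientGroup.mk'_eq_mk']
        exact ⟨(n : F)⁻¹, N.inv_mem n.2, by group⟩
      · intro a; apply Subtype.ext; simp
      · intro n; apply Subtype.ext; simp
    have hdvd : ¬ p ∣ Nat.card T := by
      rw [hcard]
      exact (Nat.Prime.coprime_iff_not_dvd (Fact.out)).mp hcop.symm
    obtain ⟨a, ha⟩ := hP.nonempty_fixed_point_of_prime_not_dvd_card T hdvd
    refine ⟨a, ?_, a.2⟩
    rw [SetLike.mem_coe, Subgroup.mem_centralizer_iff]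
    intro g hg
    have := ha ⟨g, hg⟩
    have h2 : g * (a : F) * g⁻¹ = (a : F) := congrArg Subtype.val this
    calc g * (a : F) = (g * (a : F) * g⁻¹) * g := by group
    _ = (a : F) * g := by rw [h2]
  · rintro _ ⟨a, ha, rfl⟩
    rw [Subgroup.mem_centralizer_iff]
    rintro _ ⟨g, hg, rfl⟩
    rw [← map_mul, ← map_mul, (Subgroup.mem_centralizer_iff.mp ha) g hg]
end

section
/- Let F be a finite group, N a normal subgroup of F of order coprime to a prime p, and let P and U be two p-subgroups of F. Then P and U are conjugate in F if and only if their images PN/N and UN/N are conjugate in F/N. -/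
/-! If `PN/N` and `UN/N` are conjugate in `F/N`, then after conjugating `P` we may assume
`PN = UN =: K`. As `P ∩ N = U ∩ N = 1`, both `P` and `U` have index `|N|` in `K`, which is prime
to `p`, so they are Sylow `p`-subgroups of `K` and hence conjugate in `K` by Sylow's theorem. -/

open Subgroup

section

variable {G H : Type*} [Group G] [Group H]

theorem Subgroup.map_conj_mul (g h : G) (P : Subgroup G) :
    P.map (MulAut.conj (g * h)).toMonoidHom =
      (P.map (MulAut.conj h).toMonoidHom).map (MulAut.conj g).toMonoidHom := by
  rw [map_map]
  congr 1
  ext x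
  simp [mul_assoc]

theorem Subgroup.map_map_conj (f : G →* H) (g : G) (P : Subgroup G) :
    (P.map (MulAut.conj g).toMonoidHom).map f =
      (P.map f).map (MulAut.conj (f g)).toMonoidHom := by
  rw [map_map, map_map]
  congr 1
  ext x
  simp

theorem Subgroup.relIndex_sup_eq_card_of_disjoint_s2 [Finite G] {A N : Subgroup G} [N.Normal]
    (h : Disjoint A N) : A.relIndex (A ⊔ N) = Nat.card N := by
  have hN : N.relIndex A = Nat.card A := by
    rw [← inf_relIndex_right, inf_comm, disjoint_iff.mp h, relIndex_bot_left]
  -- count `|A ⊔ N|` along the towers `⊥ ≤ A ≤ A ⊔ N` and `⊥ ≤ N ≤ A ⊔ N`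
  have hA := relIndex_mul_relIndex ⊥ A (A ⊔ N) bot_le le_sup_left
  have hcard := relIndex_mul_relIndex ⊥ N (A ⊔ N) bot_le le_sup_right
  rw [relIndex_sup_right, hN, ← hA, relIndex_bot_left, relIndex_bot_left, mul_comm] at hcard
  exact (Nat.eq_of_mul_eq_mul_left Nat.card_pos hcard).symm

theorem IsPGroup.exists_conj_eq_of_not_dvd_relIndex [Finite G] {p : ℕ} [Fact p.Prime]
    {K P U : Subgroup G} (hP : IsPGroup p P) (hU : IsPGroup p U) (hPK : P ≤ K) (hUK : U ≤ K)
    (hPi : ¬ p ∣ P.relIndex K) (hUi : ¬ p ∣ U.relIndex K) :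
    ∃ k ∈ K, P.map (MulAut.conj k).toMonoidHom = U := by
  let S : Sylow p K := (hP.comap_of_injective K.subtype K.subtype_injective).toSylow hPi
  let T : Sylow p K := (hU.comap_of_injective K.subtype K.subtype_injective).toSylow hUi
  obtain ⟨k, hk⟩ := MulAction.exists_smul_eq K S T
  have hcomm : K.subtype.comp (MulAut.conj k).toMonoidHom
      = (MulAut.conj (k : G)).toMonoidHom.comp K.subtype := by
    ext; rfl
  refine ⟨k, k.2, ?_⟩
  calc P.map (MulAut.conj (k : G)).toMonoidHom
      = ((P.subgroupOf K).map (MulAut.conj k).toMonoidHom).map K.subtype := by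
        rw [map_map, hcomm, ← map_map, subgroupOf_map_subtype, inf_of_le_left hPK]
    _ = ((k • S : Sylow p K) : Subgroup K).map K.subtype := rfl
    _ = U := by simp [hk, T, hUK]

theorem IsPGroup.disjoint_of_coprime_card [Finite G] {p : ℕ} [Fact p.Prime] {P N : Subgroup G}
    (hP : IsPGroup p P) (hcop : (Nat.card N).Coprime p) : Disjoint P N := by
  obtain ⟨n, hn⟩ := hP.exists_card_eq
  exact disjoint_of_coprime_natCard (hn ▸ (hcop.pow_right n).symm)

theorem IsPGroup.exists_conj_eq_of_sup_eq_of_coprime [Finite G] {p : ℕ} [Fact p.Prime] {N P U : Subgroup G}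
    [N.Normal] (hP : IsPGroup p P) (hU : IsPGroup p U) (hcop : (Nat.card N).Coprime p)
    (h : P ⊔ N = U ⊔ N) : ∃ g, P.map (MulAut.conj g).toMonoidHom = U := by
  have hN : ¬ p ∣ Nat.card N := (Nat.Prime.coprime_iff_not_dvd Fact.out).mp hcop.symm
  have hPi := relIndex_sup_eq_card_of_disjoint_s2 (hP.disjoint_of_coprime_card hcop)
  have hUi := relIndex_sup_eq_card_of_disjoint_s2 (hU.disjoint_of_coprime_card hcop)
  rw [h] at hPi
  obtain ⟨k, -, hk⟩ := hP.exists_conj_eq_of_not_dvd_relIndex hU (h ▸ le_sup_left) le_sup_left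
    (hPi ▸ hN) (hUi ▸ hN)
  exact ⟨k, hk⟩

end

/-- Let `F` be a finite group, `N ⊴ F` of order coprime to a prime `p`, and `P`, `U` two
`p`-subgroups of `F`. Then `P` and `U` are conjugate in `F` if and only if their images
`PN/N` and `UN/N` are conjugate in `F⧸N`. -/
theorem conj_iff_map_quotient_conj_of_coprime {F : Type*} [Group F] [Finite F]
    (p : ℕ) [Fact p.Prime] (N : Subgroup F) [N.Normal] (P U : Subgroup F)
    (hP : IsPGroup p P) (hU : IsPGroup p U) (hcop : Nat.Coprime (Nat.card N) p) :
    (∃ g : F, P.map (MulAut.conj g).toMonoidHom = U) ↔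
      (∃ q : F ⧸ N, (P.map (QuotientGroup.mk' N)).map (MulAut.conj q).toMonoidHom
        = U.map (QuotientGroup.mk' N)) := by
  constructor
  · rintro ⟨g, rfl⟩
    exact ⟨QuotientGroup.mk' N g, (map_map_conj _ g P).symm⟩
  · rintro ⟨q, hq⟩
    obtain ⟨g, rfl⟩ := QuotientGroup.mk'_surjective N q
    rw [← map_map_conj, map_eq_map_iff, QuotientGroup.ker_mk'] at hq
    obtain ⟨k, hk⟩ := (hP.map _).exists_conj_eq_of_sup_eq_of_coprime hU hcop hq
    exact ⟨k * g, by rw [map_conj_mul, hk]⟩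
end

section
/- Let I be a group of the form Z_2 ⋉ (Z_n × Z_m), where the generator of Z_2 acts on the abelian normal subgroup A = Z_n × Z_m by inverting every element. Then every elementary abelian 2-subgroup of I has rank at most 3. -/
/-!
Projecting onto the `Z_2` factor, an elementary abelian 2-subgroup `E` has index at most 2 over
its kernel `E ∩ A`, and the left components of that kernel are 2-torsion elements of
`Z_n × Z_m`. The 2-torsion of a cyclic group is a cyclic group of exponent dividing 2, hence has
at most two elements; so `|E ∩ A| ≤ 4` and `|E| ≤ 8`.
-/

/-- An automorphism of order dividing 2 gives a homomorphism
`Multiplicative (ZMod 2) →* MulAut A`. -/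
noncomputable def zmod2Hom {A : Type*} [Group A] (σ : MulAut A) (hσ : σ * σ = 1) :
    Multiplicative (ZMod 2) →* MulAut A :=
  AddMonoidHom.toMultiplicativeLeft
    (ZMod.lift 2 ⟨zmultiplesHom (Additive (MulAut A)) (Additive.ofMul σ), by
      simp [zmultiplesHom]
      rw [two_zsmul]
      exact_mod_cast congrArg Additive.ofMul hσ⟩)

/-- The action of `ZMod 2` on an abelian group `A` where the nontrivial element acts by
sending each element to its inverse. -/
noncomputable def invAction (A : Type*) [CommGroup A] :
    Multiplicative (ZMod 2) →* MulAut A :=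
  zmod2Hom (MulEquiv.inv A) (by ext x; simp)

/-- The semidirect product `Z_2 ⋉ (Z_n × Z_m)`, where the nontrivial element of `Z_2` acts
on the abelian normal subgroup `A = Z_n × Z_m` by sending each element to its inverse. -/
noncomputable abbrev InvSdp (n m : ℕ) :=
  SemidirectProduct (Multiplicative (ZMod n × ZMod m)) (Multiplicative (ZMod 2))
    (invAction (Multiplicative (ZMod n × ZMod m)))

theorem IsAddCyclic.card_two_torsion_dvd_two {G : Type*} [AddCommGroup G] [IsAddCyclic G] :
    Nat.card {a : G // 2 • a = 0} ∣ 2 := by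
  let T : AddSubgroup G := (nsmulAddMonoidHom 2 : G →+ G).ker
  have hT : Nat.card T = Nat.card {a : G // 2 • a = 0} := rfl
  rw [← hT, ← IsAddCyclic.exponent_eq_card]
  exact AddMonoid.exponent_dvd_of_forall_nsmul_eq_zero fun a => Subtype.ext a.2

namespace MonoidHom
variable {G Q : Type*} [Group G] [Group Q] [Finite Q] (f : G →* Q)

theorem card_le_card_ker_mul_card : Nat.card G ≤ Nat.card f.ker * Nat.card Q := by
  rw [← f.ker.card_mul_index, Subgroup.index_ker f]
  exact Nat.mul_le_mul_left _ (Subgroup.card_le_card_group _)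

theorem finite_of_finite_ker [Finite f.ker] : Finite G :=
  Finite.of_subgroup_quotient f.ker

end MonoidHom

namespace SemidirectProduct
variable {N G : Type*} [Group N] [Group G] {φ : G →* MulAut N}

theorem finite_and_card_le_of_forall_mul_self_eq_one [Finite G] [Finite {n : N // n ^ 2 = 1}]
    (E : Subgroup (N ⋊[φ] G)) (hE : ∀ x ∈ E, x * x = 1) :
    Finite E ∧ Nat.card E ≤ Nat.card {n : N // n ^ 2 = 1} * Nat.card G := by
  let f : E →* G := rightHom.comp E.subtype
  have hleft_sq (x : f.ker) : x.1.1.left ^ 2 = 1 := by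
    have hx : x.1.1.right = 1 := x.2
    simpa [sq, hx] using congrArg left (hE x.1.1 x.1.2)
  let j : f.ker → {n : N // n ^ 2 = 1} := fun x => ⟨x.1.1.left, hleft_sq x⟩
  have hj : Function.Injective j := fun x y hxy => Subtype.ext <| Subtype.ext <|
    SemidirectProduct.ext (congrArg Subtype.val hxy) (x.2.trans y.2.symm)
  have : Finite f.ker := Finite.of_injective j hj
  exact ⟨f.finite_of_finite_ker, (f.card_le_card_ker_mul_card).trans
    (Nat.mul_le_mul_right _ (Nat.card_le_card_of_injective j hj))⟩

end SemidirectProduct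

theorem card_two_torsion_prod_dvd_four {A B : Type*} [AddCommGroup A] [AddCommGroup B]
    [IsAddCyclic A] [IsAddCyclic B] : Nat.card {p : A × B // 2 • p = 0} ∣ 4 := by
  have e : {p : A × B // 2 • p = 0} ≃ {a : A // 2 • a = 0} × {b : B // 2 • b = 0} :=
    (Equiv.subtypeEquivRight fun p => by simp only [Prod.ext_iff, Prod.smul_fst, Prod.smul_snd,
      Prod.fst_zero, Prod.snd_zero]).trans Equiv.subtypeProdEquivProd
  rw [Nat.card_congr e, Nat.card_prod]
  exact mul_dvd_mul IsAddCyclic.card_two_torsion_dvd_two IsAddCyclic.card_two_torsion_dvd_two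

/-- Every elementary abelian 2-subgroup of `I = Z_2 ⋉ (Z_n × Z_m)` (inversion action)
has rank at most 3, i.e. is finite of order at most `2^3 = 8`. -/
theorem elementary_abelian_subgroup_rank_le_three (n m : ℕ)
    (E : Subgroup (InvSdp n m)) (hE : ∀ x ∈ E, x * x = 1) :
    Finite E ∧ Nat.card E ≤ 2 ^ 3 := by
  -- `x ^ 2 = 1` in `Multiplicative A` is `2 • x = 0` in `A` by definition.
  have h4 : Nat.card {x : Multiplicative (ZMod n × ZMod m) // x ^ 2 = 1} ∣ 4 :=
    card_two_torsion_prod_dvd_four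
  have : Finite {x : Multiplicative (ZMod n × ZMod m) // x ^ 2 = 1} :=
    Nat.finite_of_card_ne_zero (ne_zero_of_dvd_ne_zero four_ne_zero h4)
  obtain ⟨hfin, hcard⟩ := SemidirectProduct.finite_and_card_le_of_forall_mul_self_eq_one E hE
  refine ⟨hfin, hcard.trans ?_⟩
  calc _ ≤ 4 * 2 := Nat.mul_le_mul (Nat.le_of_dvd four_pos h4) (by simp)
    _ = 2 ^ 3 := rfl
end
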